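/- Let ρ ∈ Matrix (Fin d) (Fin d) ℂ be positive definite with trace 1, and let A be a measurement with n outcomes on ℂ^d all of whose effects are nonzero. Then the trace of F_ρ(A), which equals the real number ∑ x, tr(ρ * A x * A x) / tr(ρ * A x), is at most d; moreover it equals d if and only if every effect A x has matrix rank equal to 1. -/

import Mathlib

open Matrix
open scoped Kronecker ComplexOrder

noncomputable section

/-- A measurement (POVM): a finite family of positive semidefinite matrices summing to `1`. -/
def IsMeasurement {ι κ : Type*} [Fintype ι] [DecidableEq ι] [Fintype κ]
    (A : κ → Matrix ι ι ℂ) : Prop :=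
  (∀ x, (A x).PosSemidef) ∧ ∑ x, A x = 1

/-- `A` is a post-processing of `B`: `A ⪯ B`. -/
def PostProc {ι : Type*} {n m : ℕ}
    (A : Fin n → Matrix ι ι ℂ) (B : Fin m → Matrix ι ι ℂ) : Prop :=
  ∃ μ : Fin n → Fin m → ℝ,
    (∀ x y, 0 ≤ μ x y) ∧ (∀ y, ∑ x, μ x y = 1) ∧
    (∀ x, A x = ∑ y, (μ x y : ℂ) • B y)

/-- The outer product `|E⟩⟨F|` of the vectorizations of two matrices. -/
def outerProd {ι : Type*} (E F : Matrix ι ι ℂ) : Matrix (ι × ι) (ι × ι) ℂ :=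
  Matrix.of fun p q => E p.1 p.2 * star (F q.1 q.2)

/-- The (un-normalized) Fisher information map of a measurement. -/
noncomputable def Fisher {ι κ : Type*} [Fintype ι] [Fintype κ]
    (A : κ → Matrix ι ι ℂ) : Matrix (ι × ι) (ι × ι) ℂ :=
  ∑ x, (Matrix.trace (A x))⁻¹ • outerProd (A x) (A x)

/-- The old `Matrix.PosSemidef.sqrt`, spelled out. -/
noncomputable def psdSqrt {ι : Type*} [Fintype ι] [DecidableEq ι] {M : Matrix ι ι ℂ}
    (hM : M.PosSemidef) : Matrix ι ι ℂ :=
  (hM.1.eigenvectorUnitary : Matrix ι ι ℂ) *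
    diagonal (fun i => ((Real.sqrt (hM.1.eigenvalues i) : ℝ) : ℂ)) *
    (star hM.1.eigenvectorUnitary : Matrix ι ι ℂ)

/-- The generalized Fisher information map of a measurement, relative to a
positive definite state `ρ` (with positive semidefinite square root `ρ^{1/2}`). -/
noncomputable def FisherRho {ι κ : Type*} [Fintype ι] [DecidableEq ι] [Fintype κ]
    {ρ : Matrix ι ι ℂ} (hρ : ρ.PosDef) (A : κ → Matrix ι ι ℂ) :
    Matrix (ι × ι) (ι × ι) ℂ :=
  ∑ x, (Matrix.trace (ρ * A x))⁻¹ •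
    outerProd (psdSqrt hρ.posSemidef * A x) (psdSqrt hρ.posSemidef * A x)

/-- The height of a finite family of self-adjoint matrices: the infimum of the traces of
Hermitian matrices dominating every member in the Loewner order. -/
noncomputable def height {ι κ : Type*} [Fintype ι] [Fintype κ]
    (X : κ → Matrix ι ι ℂ) : ℝ :=
  sInf { t : ℝ | ∃ H : Matrix ι ι ℂ, H.IsHermitian ∧
    (∀ i, (H - X i).PosSemidef) ∧ t = (Matrix.trace H).re }

/-!
For a nonzero positive semidefinite `A` with eigenvalues `λᵢ`, the matrix `tr A • A - A²` has
eigenvalues `λᵢ (tr A - λᵢ) ≥ 0`, and these all vanish iff exactly one `λᵢ` is nonzero, i.e.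
`rank A = 1`. Pairing with the positive definite `ρ` (conjugating by `ρ^{1/2}`) gives
`tr (ρ A²) ≤ tr A · tr (ρ A)`, with equality iff `rank A = 1`. The trace of `F_ρ(A)` is
`∑ₓ tr (ρ Aₓ²) / tr (ρ Aₓ)`, hence at most `∑ₓ tr Aₓ = tr 1 = d`.
-/

open scoped MatrixOrder

lemma card_ne_zero_eq_one_iff {ι : Type*} [Fintype ι] {μ : ι → ℝ} (hμ : ∀ i, 0 ≤ μ i)
    (hne : μ ≠ 0) :
    Fintype.card {i // μ i ≠ 0} = 1 ↔ ∀ i, μ i = 0 ∨ μ i = ∑ j, μ j := by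
  classical
  rw [Fintype.card_eq_one_iff]
  constructor
  · rintro ⟨⟨i₀, _⟩, huniq⟩ i
    have hsum : ∑ j, μ j = μ i₀ := Finset.sum_eq_single i₀
      (fun j _ hj => by_contra fun h => hj (congrArg Subtype.val (huniq ⟨j, h⟩))) (by simp)
    by_cases hi : μ i = 0
    · exact .inl hi
    · exact .inr (hsum ▸ congrArg (μ ∘ Subtype.val) (huniq ⟨i, hi⟩))
  · intro h
    obtain ⟨i₀, hi₀⟩ := Function.ne_iff.mp hne
    refine ⟨⟨i₀, hi₀⟩, fun ⟨j, hj⟩ => Subtype.ext (by_contra fun hji => ?_)⟩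
    have hpair : μ j + μ i₀ ≤ ∑ k, μ k := by
      rw [← Finset.sum_pair hji]
      exact Finset.sum_le_sum_of_subset_of_nonneg (Finset.subset_univ _) fun k _ _ => hμ k
    have hpos : 0 < μ i₀ := (hμ i₀).lt_of_ne' hi₀
    have hj' := (h j).resolve_left hj
    have hi' := (h i₀).resolve_left hi₀
    linarith

namespace Matrix

variable {ι 𝕜 : Type*} [Fintype ι] [RCLike 𝕜]

lemma trace_outerProd (E F : Matrix ι ι ℂ) : trace (outerProd E F) = trace (E * Fᴴ) := by
  simp [outerProd, trace, mul_apply, conjTranspose_apply, Fintype.sum_prod_type]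

lemma trace_sub_trace_mul_mul_self_div {ρ A : Matrix ι ι ℂ} (hc : trace (ρ * A) ≠ 0) :
    A.trace - trace (ρ * A * A) / trace (ρ * A) =
      trace (ρ * (A.trace • A - A * A)) / trace (ρ * A) := by
  rw [Matrix.mul_sub, Matrix.mul_smul, trace_sub, trace_smul, smul_eq_mul, Matrix.mul_assoc]
  field_simp

variable [DecidableEq ι]

lemma IsHermitian.trace_smul_sub_mul_self_eq_cfc {A : Matrix ι ι 𝕜} (hA : A.IsHermitian) :
    A.trace • A - A * A = cfc (fun x => (∑ i, hA.eigenvalues i - x) * x) A := by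
  have htrace : A.trace = ((∑ i, hA.eigenvalues i : ℝ) : 𝕜) := by
    rw [hA.trace_eq_sum_eigenvalues, RCLike.ofReal_sum]
  rw [htrace, ← RCLike.real_smul_eq_coe_smul]
  simp only [sub_mul]
  rw [cfc_sub _ _ A, cfc_const_mul_id _ A, cfc_mul (fun x => x) (fun x => x) A, cfc_id' ℝ A]

lemma PosSemidef.posSemidef_trace_smul_sub_mul_self {A : Matrix ι ι 𝕜} (hA : A.PosSemidef) :
    (A.trace • A - A * A).PosSemidef := by
  rw [hA.1.trace_smul_sub_mul_self_eq_cfc, ← nonneg_iff_posSemidef]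
  refine cfc_nonneg fun x hx => ?_
  obtain ⟨i, rfl⟩ := hA.1.spectrum_real_eq_range_eigenvalues ▸ hx
  have hle : hA.1.eigenvalues i ≤ ∑ j, hA.1.eigenvalues j :=
    Finset.single_le_sum (fun j _ => hA.eigenvalues_nonneg j) (Finset.mem_univ i)
  exact mul_nonneg (sub_nonneg.mpr hle) (hA.eigenvalues_nonneg i)

lemma PosSemidef.trace_smul_sub_mul_self_eq_zero_iff {A : Matrix ι ι 𝕜} (hA : A.PosSemidef)
    (h0 : A ≠ 0) : A.trace • A - A * A = 0 ↔ A.rank = 1 := by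
  rw [hA.1.rank_eq_card_non_zero_eigs,
    card_ne_zero_eq_one_iff hA.eigenvalues_nonneg (mt hA.1.eigenvalues_eq_zero_iff.mp h0),
    hA.1.trace_smul_sub_mul_self_eq_cfc, ← cfc_zero ℝ A, cfc_eq_cfc_iff_eqOn,
    hA.1.spectrum_real_eq_range_eigenvalues]
  simp only [Set.EqOn, Set.forall_mem_range, Pi.zero_apply, mul_eq_zero, sub_eq_zero]
  exact forall_congr' fun i => or_comm.trans (or_congr_right eq_comm)

variable {M ρ N A : Matrix ι ι ℂ}

lemma psdSqrt_eq_cfc (hM : M.PosSemidef) : psdSqrt hM = cfc Real.sqrt M := by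
  rw [hM.1.cfc_eq, IsHermitian.cfc, Unitary.conjStarAlgAut_apply]
  rfl

lemma isHermitian_psdSqrt (hM : M.PosSemidef) : (psdSqrt hM).IsHermitian := by
  rw [psdSqrt_eq_cfc hM]
  exact cfc_predicate _ _

lemma psdSqrt_mul_self (hM : M.PosSemidef) : psdSqrt hM * psdSqrt hM = M := by
  rw [psdSqrt_eq_cfc hM, ← cfc_mul _ _ M]
  conv_rhs => rw [← cfc_id' ℝ M]
  refine cfc_congr fun x hx => Real.mul_self_sqrt ?_
  obtain ⟨i, rfl⟩ := hM.1.spectrum_real_eq_range_eigenvalues ▸ hx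
  exact hM.eigenvalues_nonneg i

lemma PosSemidef.trace_mul_eq_trace_psdSqrt_conj (hM : M.PosSemidef) (N : Matrix ι ι ℂ) :
    trace (M * N) = trace (psdSqrt hM * N * psdSqrt hM) := by
  conv_lhs => rw [← psdSqrt_mul_self hM]
  rw [Matrix.mul_assoc, trace_mul_comm]

lemma PosSemidef.psdSqrt_conj (hM : M.PosSemidef) {N : Matrix ι ι ℂ} (hN : N.PosSemidef) :
    (psdSqrt hM * N * psdSqrt hM).PosSemidef := by
  simpa [(isHermitian_psdSqrt hM).eq] using hN.mul_mul_conjTranspose_same (psdSqrt hM)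

lemma PosSemidef.trace_mul_nonneg (hρ : ρ.PosSemidef) (hN : N.PosSemidef) :
    0 ≤ trace (ρ * N) := by
  rw [hρ.trace_mul_eq_trace_psdSqrt_conj]
  exact (hρ.psdSqrt_conj hN).trace_nonneg

lemma PosDef.trace_mul_eq_zero_iff (hρ : ρ.PosDef) (hN : N.PosSemidef) :
    trace (ρ * N) = 0 ↔ N = 0 := by
  have hS : IsUnit (psdSqrt hρ.posSemidef) :=
    isUnit_of_mul_isUnit_left ((psdSqrt_mul_self hρ.posSemidef).symm ▸ hρ.isUnit)
  rw [hρ.posSemidef.trace_mul_eq_trace_psdSqrt_conj,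
    (hρ.posSemidef.psdSqrt_conj hN).trace_eq_zero_iff, hS.mul_left_eq_zero, hS.mul_right_eq_zero]

lemma PosDef.trace_mul_pos (hρ : ρ.PosDef) (hN : N.PosSemidef) (h0 : N ≠ 0) :
    0 < trace (ρ * N) :=
  (hρ.posSemidef.trace_mul_nonneg hN).lt_of_ne' (mt (hρ.trace_mul_eq_zero_iff hN).mp h0)

-- In `ComplexOrder`, so this also says that the left-hand side is real.
lemma PosDef.trace_mul_mul_self_div_le (hρ : ρ.PosDef) (hA : A.PosSemidef) (h0 : A ≠ 0) :
    trace (ρ * A * A) / trace (ρ * A) ≤ A.trace := by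
  have hc := hρ.trace_mul_pos hA h0
  rw [← sub_nonneg, trace_sub_trace_mul_mul_self_div hc.ne']
  exact div_nonneg (hρ.posSemidef.trace_mul_nonneg hA.posSemidef_trace_smul_sub_mul_self) hc.le

lemma PosDef.trace_mul_mul_self_div_eq_iff (hρ : ρ.PosDef) (hA : A.PosSemidef) (h0 : A ≠ 0) :
    trace (ρ * A * A) / trace (ρ * A) = A.trace ↔ A.rank = 1 := by
  have hc := (hρ.trace_mul_pos hA h0).ne'
  rw [eq_comm, ← sub_eq_zero, trace_sub_trace_mul_mul_self_div hc, div_eq_zero_iff,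
    or_iff_left hc, hρ.trace_mul_eq_zero_iff hA.posSemidef_trace_smul_sub_mul_self,
    hA.trace_smul_sub_mul_self_eq_zero_iff h0]

end Matrix

lemma trace_fisherRho {ι κ : Type*} [Fintype ι] [DecidableEq ι] [Fintype κ]
    {ρ : Matrix ι ι ℂ} (hρ : ρ.PosDef) {A : κ → Matrix ι ι ℂ}
    (hA : ∀ x, (A x).IsHermitian) :
    trace (FisherRho hρ A) = ∑ x, trace (ρ * A x * A x) / trace (ρ * A x) := by
  simp only [FisherRho, trace_sum, trace_smul, Matrix.trace_outerProd, smul_eq_mul]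
  refine Finset.sum_congr rfl fun x _ => ?_
  rw [inv_mul_eq_div, conjTranspose_mul, (hA x).eq, (Matrix.isHermitian_psdSqrt _).eq,
    ← Matrix.mul_assoc, trace_mul_comm, ← Matrix.mul_assoc, ← Matrix.mul_assoc,
    Matrix.psdSqrt_mul_self]

theorem stmt6_general {d n : ℕ} {ρ : Matrix (Fin d) (Fin d) ℂ} (hρ : ρ.PosDef)
    (A : Fin n → Matrix (Fin d) (Fin d) ℂ) (hA : IsMeasurement A) (hA0 : ∀ x, A x ≠ 0)
    (T : ℝ) (hT : (T : ℂ) = ∑ x, Matrix.trace (ρ * A x * A x) / Matrix.trace (ρ * A x)) :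
    Matrix.trace (FisherRho hρ A) = (T : ℂ) ∧ T ≤ (d : ℝ) ∧
      (T = (d : ℝ) ↔ ∀ x, (A x).rank = 1) := by
  obtain ⟨hpsd, hsum⟩ := hA
  have hle : ∀ x ∈ Finset.univ, trace (ρ * A x * A x) / trace (ρ * A x) ≤ (A x).trace :=
    fun x _ => hρ.trace_mul_mul_self_div_le (hpsd x) (hA0 x)
  have hd : ∑ x, (A x).trace = ((d : ℝ) : ℂ) := by
    rw [← trace_sum, hsum, trace_one, Fintype.card_fin, Complex.ofReal_natCast]
  refine ⟨by rw [trace_fisherRho hρ fun x => (hpsd x).1, hT], ?_, ?_⟩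
  · rw [← Complex.real_le_real, hT, ← hd]
    exact Finset.sum_le_sum hle
  · rw [← Complex.ofReal_inj, hT, ← hd, Finset.sum_eq_sum_iff_of_le hle]
    simp only [Finset.mem_univ, true_implies]
    exact forall_congr' fun x => hρ.trace_mul_mul_self_div_eq_iff (hpsd x) (hA0 x)

/-- Upper bound d on the trace of the generalized Fisher information matrix,
with equality iff the measurement is rank-1. -/
theorem stmt6 {d n : ℕ} {ρ : Matrix (Fin d) (Fin d) ℂ} (hρ : ρ.PosDef)
    (hρtr : Matrix.trace ρ = 1)
    (A : Fin n → Matrix (Fin d) (Fin d) ℂ) (hA : IsMeasurement A) (hA0 : ∀ x, A x ≠ 0)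
    (T : ℝ) (hT : (T : ℂ) = ∑ x, Matrix.trace (ρ * A x * A x) / Matrix.trace (ρ * A x)) :
    Matrix.trace (FisherRho hρ A) = (T : ℂ) ∧ T ≤ (d : ℝ) ∧
      (T = (d : ℝ) ↔ ∀ x, (A x).rank = 1) :=
  stmt6_general hρ A hA hA0 T hT
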